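/- arXiv:1708.07947 — 2 statements merged into one kernel-verified Lean document; each statement's English description precedes it below -/
import Mathlib

section
/- Let A1, A2 ∈ ℂ^{n×n}, B1, B2 ∈ ℂ^{n×m}, and let F1, F2 ∈ ℝ^{p×p} be real matrices (regarded as complex). For X1, X2 ∈ ℂ^{n×p} and Y1, Y2 ∈ ℂ^{m×p}, define X_± := X1 ± X2^# and Y_± := Y1 ± Y2^# (equivalently X1 = (X_+ + X_-)/2, X2 = ((X_+ - X_-)/2)^#, similarly for Y). Then (X1, X2, Y1, Y2) satisfies the coupled equations [A1X1 + A2^#X2 + B1Y1 + B2^#Y2 = X1F1 + X2^#F2 and A1X2^# + A2^#X1^# + B1Y2^# + B2^#Y1^# = X1F2 + X2^#F1] if and only if (X_+, Y_+, X_-, Y_-) satisfies the decoupled equations [A1X_+ + A2^#X_+^# + B1Y_+ + B2^#Y_+^# = X_+(F1 + F2) and A1X_- - A2^#X_-^# + B1Y_- - B2^#Y_-^# = X_-(F1 - F2)]. -/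
open Matrix

/-- Entrywise complex conjugate of a complex matrix. -/
noncomputable def mconj {n m : Type*} (M : Matrix n m ℂ) : Matrix n m ℂ :=
  M.map (starRingEnd ℂ)

lemma mconj_add {n m : Type*} (A B : Matrix n m ℂ) :
    mconj (A + B) = mconj A + mconj B := by
  ext i j; simp [mconj]

lemma mconj_sub {n m : Type*} (A B : Matrix n m ℂ) :
    mconj (A - B) = mconj A - mconj B := by
  ext i j; simp [mconj]

lemma mconj_mconj {n m : Type*} (A : Matrix n m ℂ) : mconj (mconj A) = A := by
  ext i j; simp [mconj]

/-- with real `F1, F2`, the coupled generalized Sylvester matrix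
equations decouple under the substitution `X± = X1 ± X2^#`, `Y± = Y1 ± Y2^#`. -/
theorem stmt_6 {n m p : ℕ}
    (A1 A2 : Matrix (Fin n) (Fin n) ℂ) (B1 B2 : Matrix (Fin n) (Fin m) ℂ)
    (F1 F2 : Matrix (Fin p) (Fin p) ℝ)
    (X1 X2 Xp Xm : Matrix (Fin n) (Fin p) ℂ) (Y1 Y2 Yp Ym : Matrix (Fin m) (Fin p) ℂ)
    (hXp : Xp = X1 + mconj X2) (hXm : Xm = X1 - mconj X2)
    (hYp : Yp = Y1 + mconj Y2) (hYm : Ym = Y1 - mconj Y2) :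
    (A1 * X1 + mconj A2 * X2 + B1 * Y1 + mconj B2 * Y2
        = X1 * F1.map Complex.ofReal + mconj X2 * F2.map Complex.ofReal ∧
      A1 * mconj X2 + mconj A2 * mconj X1 + B1 * mconj Y2 + mconj B2 * mconj Y1
        = X1 * F2.map Complex.ofReal + mconj X2 * F1.map Complex.ofReal)
    ↔
    (A1 * Xp + mconj A2 * mconj Xp + B1 * Yp + mconj B2 * mconj Yp
        = Xp * (F1.map Complex.ofReal + F2.map Complex.ofReal) ∧
      A1 * Xm - mconj A2 * mconj Xm + B1 * Ym - mconj B2 * mconj Ym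
        = Xm * (F1.map Complex.ofReal - F2.map Complex.ofReal)) := by
  subst hXp hXm hYp hYm
  simp only [mconj_add, mconj_sub, mconj_mconj, Matrix.mul_add, Matrix.add_mul, Matrix.mul_sub, Matrix.sub_mul]
  constructor
  · rintro ⟨h1, h2⟩
    rw [← sub_eq_zero] at h1 h2
    constructor
    · rw [← sub_eq_zero]
      have h := congrArg₂ (· + ·) h1 h2
      simp only [add_zero] at h
      rw [← h]; abel
    · rw [← sub_eq_zero]
      have h := congrArg₂ (· - ·) h1 h2
      simp only [sub_zero] at h
      rw [← h]; abel
  · rintro ⟨hP, hM⟩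
    rw [← sub_eq_zero] at hP hM
    constructor
    · rw [← sub_eq_zero]
      apply smul_right_injective (Matrix (Fin n) (Fin p) ℂ) (two_ne_zero (α := ℂ))
      have h := congrArg₂ (· + ·) hP hM
      simp only [add_zero] at h
      dsimp only
      rw [smul_zero, ← h]; module
    · rw [← sub_eq_zero]
      apply smul_right_injective (Matrix (Fin n) (Fin p) ℂ) (two_ne_zero (α := ℂ))
      have h := congrArg₂ (· - ·) hP hM
      simp only [sub_zero] at h
      dsimp only
      rw [smul_zero, ← h]; module
end

section
/- Let A2 ∈ ℂ^{n×n}, B2 ∈ ℂ^{n×m}, and let N_{0i} ∈ ℂ^{n×m}, D_{0i} ∈ ℂ^{m×m} (i = 0,…,2ϖ) satisfy s·N_0^#(s) - A2·N_0(s) = B2·D_0(s) for all s ∈ ℂ, where N_0(s) := Σ_i N_{0i}s^i and N_0^#(s) := Σ_i N_{0i}^# s^i (similarly for D_0). Let F1, F2 ∈ ℝ^{p×p} be real matrices (regarded as complex), let Z1, Z2 ∈ ℂ^{m×p}, and set Z_± := Z1 ± Z2^#. Define X_± := Σ_{i=0}^{ϖ} N_{0,2i}·Z_±·(F1 ± F2)^{2i}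 ± Σ_{i=0}^{ϖ-1} N_{0,2i+1}·Z_±^#·(F1 ± F2)^{2i+1}, and Y_± analogously with D_{0,·} in place of N_{0,·}. Then A2^#X_+^# + B2^#Y_+^# = X_+(F1 + F2) and -A2^#X_-^# - B2^#Y_-^# = X_-(F1 - F2). -/
open Matrix Finset

/-- Evaluation of the polynomial matrix with coefficients `N 0, …, N ω` at `s`. -/
noncomputable def polyEval {n m : Type*} (ω : ℕ) (N : ℕ → Matrix n m ℂ) (s : ℂ) :
    Matrix n m ℂ :=
  ∑ i ∈ range (ω + 1), s ^ i • N i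

lemma mconj_mul {a b c : Type*} [Fintype b] (M : Matrix a b ℂ) (N : Matrix b c ℂ) :
    mconj (M * N) = mconj M * mconj N := by
  simp only [mconj] ; exact Matrix.map_mul (L := M) (M := N) (f := starRingEnd ℂ)

lemma mconj_add_s10 {a b : Type*} (M N : Matrix a b ℂ) :
    mconj (M + N) = mconj M + mconj N := by
  ext i j; simp [mconj]

lemma mconj_neg {a b : Type*} (M : Matrix a b ℂ) : mconj (-M) = -(mconj M) := by
  ext i j; simp [mconj]

lemma mconj_mconj_s10 {a b : Type*} (M : Matrix a b ℂ) : mconj (mconj M) = M := by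
  ext i j; simp [mconj]

lemma mconj_zero {a b : Type*} : mconj (0 : Matrix a b ℂ) = 0 := by
  ext i j; simp [mconj]

lemma mconj_one {a : Type*} [DecidableEq a] : mconj (1 : Matrix a a ℂ) = 1 := by
  ext i j; by_cases h : i = j <;> simp [mconj, Matrix.one_apply, h]

lemma mconj_smul {a b : Type*} (c : ℂ) (M : Matrix a b ℂ) :
    mconj (c • M) = (starRingEnd ℂ c) • mconj M := by
  ext i j; simp [mconj]

lemma mconj_sum {a b ι : Type*} (s : Finset ι) (f : ι → Matrix a b ℂ) :
    mconj (∑ i ∈ s, f i) = ∑ i ∈ s, mconj (f i) := by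
  ext x y; simp [mconj, Matrix.sum_apply]

lemma mconj_pow {a : Type*} [Fintype a] [DecidableEq a] (M : Matrix a a ℂ) (k : ℕ) :
    mconj (M ^ k) = mconj M ^ k := by
  induction k with
  | zero => simp [mconj_one]
  | succ k ih => rw [pow_succ, pow_succ, mconj_mul, ih]

lemma mconj_realMap {a b : Type*} (F : Matrix a b ℝ) :
    mconj (F.map Complex.ofReal) = F.map Complex.ofReal := by
  ext i j; simp [mconj, Complex.conj_ofReal]

lemma poly_coeff_eq (K : ℕ) (c d : ℕ → ℂ)
    (h : ∀ s : ℂ, ∑ i ∈ range K, s ^ i * c i = ∑ i ∈ range K, s ^ i * d i) :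
    ∀ i ∈ range K, c i = d i := by
  have hpq : (∑ i ∈ range K, Polynomial.C (c i) * Polynomial.X ^ i)
      = ∑ i ∈ range K, Polynomial.C (d i) * Polynomial.X ^ i := by
    apply Polynomial.funext
    intro s
    simp only [Polynomial.eval_finset_sum, Polynomial.eval_mul, Polynomial.eval_C,
      Polynomial.eval_pow, Polynomial.eval_X]
    calc ∑ i ∈ range K, c i * s ^ i = ∑ i ∈ range K, s ^ i * c i :=
          Finset.sum_congr rfl fun i _ => mul_comm _ _
      _ = ∑ i ∈ range K, s ^ i * d i := h s
      _ = ∑ i ∈ range K, d i * s ^ i := Finset.sum_congr rfl fun i _ => mul_comm _ _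
  intro i hi
  have h2 := congrArg (fun q => Polynomial.coeff q i) hpq
  simp only [Polynomial.finset_sum_coeff, Polynomial.coeff_C_mul,
    Polynomial.coeff_X_pow, mul_ite, mul_one, mul_zero] at h2
  rw [Finset.sum_ite_eq (range K) i c, Finset.sum_ite_eq (range K) i d,
    if_pos hi, if_pos hi] at h2
  exact h2

lemma matrix_coeff_eq {a b : Type*} (K : ℕ) (C D : ℕ → Matrix a b ℂ)
    (h : ∀ s : ℂ, ∑ i ∈ range K, s ^ i • C i = ∑ i ∈ range K, s ^ i • D i) :
    ∀ i ∈ range K, C i = D i := by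
  intro i hi
  ext x y
  refine poly_coeff_eq K (fun k => C k x y) (fun k => D k x y) (fun s => ?_) i hi
  have := congrFun (congrFun (h s) x) y
  simpa [Matrix.sum_apply] using this

lemma sum_range_even_odd {M : Type*} [AddCommMonoid M] (K : ℕ) (f : ℕ → M) :
    ∑ k ∈ range (2 * K), f k
      = ∑ i ∈ range K, f (2 * i) + ∑ i ∈ range K, f (2 * i + 1) := by
  induction K with
  | zero => simp
  | succ K ih =>
    rw [show 2 * (K + 1) = (2 * K + 1) + 1 from by ring, sum_range_succ, sum_range_succ, ih,
      sum_range_succ, sum_range_succ]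
    abel

lemma core {n m p : ℕ} (K : ℕ)
    (A2 : Matrix (Fin n) (Fin n) ℂ) (B2 : Matrix (Fin n) (Fin m) ℂ)
    (N' : ℕ → Matrix (Fin n) (Fin m) ℂ) (D' : ℕ → Matrix (Fin m) (Fin m) ℂ)
    (hN : N' K = 0) (hD : D' K = 0)
    (h0 : A2 * N' 0 + B2 * D' 0 = 0)
    (hrec : ∀ k, mconj (N' k) = A2 * N' (k + 1) + B2 * D' (k + 1))
    (F : Matrix (Fin p) (Fin p) ℂ) (hF : mconj F = F)
    (W : ℕ → Matrix (Fin m) (Fin p) ℂ) (σ : ℂ)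
    (hW : ∀ k, mconj (W k) = σ • W (k + 1)) :
    mconj (∑ k ∈ range K, N' k * W k * F ^ k) * F
      = σ • (A2 * (∑ k ∈ range K, N' k * W k * F ^ k)
          + B2 * (∑ k ∈ range K, D' k * W k * F ^ k)) := by
  set h : ℕ → Matrix (Fin n) (Fin p) ℂ :=
    fun j => (A2 * N' j + B2 * D' j) * W j * F ^ j with hh
  have step : ∀ k, mconj (N' k * W k * F ^ k) * F = σ • h (k + 1) := by
    intro k
    rw [mconj_mul, mconj_mul, mconj_pow, hF, hrec k, hW k, hh]
    simp only [Matrix.mul_smul, Matrix.smul_mul, Matrix.mul_assoc, pow_succ]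
  have hsplit : ∀ j, h j = A2 * (N' j * W j * F ^ j) + B2 * (D' j * W j * F ^ j) := by
    intro j
    rw [hh]
    simp only [Matrix.add_mul, Matrix.mul_assoc]
  calc mconj (∑ k ∈ range K, N' k * W k * F ^ k) * F
      = ∑ k ∈ range K, mconj (N' k * W k * F ^ k) * F := by
        rw [mconj_sum, Matrix.sum_mul]
    _ = ∑ k ∈ range K, σ • h (k + 1) := Finset.sum_congr rfl fun k _ => step k
    _ = σ • ∑ k ∈ range K, h (k + 1) := by rw [Finset.smul_sum]
    _ = σ • ((∑ k ∈ range (K + 1), h k) - h 0) := by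
        rw [Finset.sum_range_succ', add_sub_cancel_right]
    _ = σ • ∑ k ∈ range K, h k := by
        rw [Finset.sum_range_succ]
        have hK : h K = 0 := by rw [hh]; simp [hN, hD]
        have h00 : h 0 = 0 := by rw [hh]; simp [h0]
        rw [hK, h00]; simp
    _ = σ • (A2 * (∑ k ∈ range K, N' k * W k * F ^ k)
          + B2 * (∑ k ∈ range K, D' k * W k * F ^ k)) := by
        rw [Matrix.mul_sum, Matrix.mul_sum, ← Finset.sum_add_distrib]
        exact congrArg _ (Finset.sum_congr rfl fun j _ => hsplit j)

/-- Truncation of a coefficient family to degrees `≤ ω`. -/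
noncomputable def trunc {a b : Type*} (ω : ℕ) (N : ℕ → Matrix a b ℂ) :
    ℕ → Matrix a b ℂ :=
  fun k => if k ≤ ω then N k else 0

lemma trunc_apply {a b : Type*} (ω : ℕ) (N : ℕ → Matrix a b ℂ) (k : ℕ) :
    trunc ω N k = if k ≤ ω then N k else 0 := rfl

/-- Shifted conjugate coefficient family. -/
noncomputable def shiftConj {a b : Type*} (ω : ℕ) (N : ℕ → Matrix a b ℂ) :
    ℕ → Matrix a b ℂ
  | 0 => 0
  | (j + 1) => mconj (trunc ω N j)

lemma combined {n m p : ℕ} (ϖ : ℕ)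
    (A2 : Matrix (Fin n) (Fin n) ℂ) (B2 : Matrix (Fin n) (Fin m) ℂ)
    (N0 : ℕ → Matrix (Fin n) (Fin m) ℂ) (D0 : ℕ → Matrix (Fin m) (Fin m) ℂ)
    (hfac : ∀ s : ℂ,
      s • polyEval (2 * ϖ) (fun i => mconj (N0 i)) s - A2 * polyEval (2 * ϖ) N0 s
        = B2 * polyEval (2 * ϖ) D0 s)
    (F : Matrix (Fin p) (Fin p) ℂ) (hF : mconj F = F)
    (W : ℕ → Matrix (Fin m) (Fin p) ℂ) (σ : ℂ)
    (hW : ∀ k, mconj (W k) = σ • W (k + 1))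
    (X : Matrix (Fin n) (Fin p) ℂ) (Y : Matrix (Fin m) (Fin p) ℂ)
    (hX : X = (∑ i ∈ range (ϖ + 1), N0 (2 * i) * W (2 * i) * F ^ (2 * i))
            + ∑ i ∈ range ϖ, N0 (2 * i + 1) * W (2 * i + 1) * F ^ (2 * i + 1))
    (hY : Y = (∑ i ∈ range (ϖ + 1), D0 (2 * i) * W (2 * i) * F ^ (2 * i))
            + ∑ i ∈ range ϖ, D0 (2 * i + 1) * W (2 * i + 1) * F ^ (2 * i + 1)) :
    mconj X * F = σ • (A2 * X + B2 * Y) := by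
  -- rewrite the even/odd sums as a single truncated sum
  have hsum : ∀ (q : ℕ) (C : ℕ → Matrix (Fin q) (Fin m) ℂ),
      ∑ k ∈ range (2 * (ϖ + 1)), trunc (2 * ϖ) C k * W k * F ^ k
        = (∑ i ∈ range (ϖ + 1), C (2 * i) * W (2 * i) * F ^ (2 * i))
          + ∑ i ∈ range ϖ, C (2 * i + 1) * W (2 * i + 1) * F ^ (2 * i + 1) := by
    intro q C
    rw [sum_range_even_odd]
    congr 1
    · refine Finset.sum_congr rfl fun i hi => ?_
      have h2 : 2 * i ≤ 2 * ϖ := by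
        have := Finset.mem_range.mp hi; omega
      rw [trunc_apply, if_pos h2]
    · rw [Finset.sum_range_succ]
      have hz : trunc (2 * ϖ) C (2 * ϖ + 1) = 0 := by
        rw [trunc_apply, if_neg (by omega)]
      rw [hz]
      simp only [Matrix.zero_mul, add_zero]
      refine Finset.sum_congr rfl fun i hi => ?_
      have h2 : 2 * i + 1 ≤ 2 * ϖ := by
        have := Finset.mem_range.mp hi; omega
      rw [trunc_apply, if_pos h2]
  -- extract the coefficient identities from hfac
  have hpoly : ∀ s : ℂ,
      ∑ k ∈ range (2 * ϖ + 2), s ^ k • shiftConj (2 * ϖ) N0 k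
        = ∑ k ∈ range (2 * ϖ + 2),
            s ^ k • (A2 * trunc (2 * ϖ) N0 k + B2 * trunc (2 * ϖ) D0 k) := by
    intro s
    have hL : ∑ k ∈ range (2 * ϖ + 2), s ^ k • shiftConj (2 * ϖ) N0 k
        = s • polyEval (2 * ϖ) (fun i => mconj (N0 i)) s := by
      rw [show (2 * ϖ + 2) = (2 * ϖ + 1) + 1 from rfl, Finset.sum_range_succ']
      simp only [shiftConj, pow_zero, one_smul, smul_zero, add_zero]
      rw [polyEval, Finset.smul_sum]
      refine Finset.sum_congr rfl fun k hk => ?_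
      have hk' : k ≤ 2 * ϖ := by have := Finset.mem_range.mp hk; omega
      rw [trunc_apply, if_pos hk', smul_smul, pow_succ, mul_comm]
    have hR : ∑ k ∈ range (2 * ϖ + 2),
          s ^ k • (A2 * trunc (2 * ϖ) N0 k + B2 * trunc (2 * ϖ) D0 k)
        = A2 * polyEval (2 * ϖ) N0 s + B2 * polyEval (2 * ϖ) D0 s := by
      rw [show (2 * ϖ + 2) = (2 * ϖ + 1) + 1 from rfl, Finset.sum_range_succ]
      have hz1 : trunc (2 * ϖ) N0 (2 * ϖ + 1) = 0 := by
        rw [trunc_apply, if_neg (by omega)]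
      have hz2 : trunc (2 * ϖ) D0 (2 * ϖ + 1) = 0 := by
        rw [trunc_apply, if_neg (by omega)]
      rw [hz1, hz2]
      simp only [Matrix.mul_zero, add_zero, smul_zero]
      simp only [smul_add, Finset.sum_add_distrib]
      congr 1
      · rw [polyEval, Matrix.mul_sum]
        refine Finset.sum_congr rfl fun k hk => ?_
        have hk' : k ≤ 2 * ϖ := by have := Finset.mem_range.mp hk; omega
        rw [trunc_apply, if_pos hk', Matrix.mul_smul]
      · rw [polyEval, Matrix.mul_sum]
        refine Finset.sum_congr rfl fun k hk => ?_
        have hk' : k ≤ 2 * ϖ := by have := Finset.mem_range.mp hk; omega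
        rw [trunc_apply, if_pos hk', Matrix.mul_smul]
    rw [hL, hR]
    have hs := hfac s
    rw [sub_eq_iff_eq_add] at hs
    rw [hs, add_comm]
  have hco := matrix_coeff_eq (2 * ϖ + 2) _ _ hpoly
  have key : ∀ k, shiftConj (2 * ϖ) N0 k
      = A2 * trunc (2 * ϖ) N0 k + B2 * trunc (2 * ϖ) D0 k := by
    intro k
    by_cases hk : k < 2 * ϖ + 2
    · exact hco k (Finset.mem_range.mpr hk)
    · cases k with
      | zero => omega
      | succ j =>
        have hj : ¬ (j ≤ 2 * ϖ) := by omega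
        have hj1 : ¬ (j + 1 ≤ 2 * ϖ) := by omega
        show mconj (trunc (2 * ϖ) N0 j) = _
        rw [trunc_apply, if_neg hj, trunc_apply, if_neg hj1, trunc_apply, if_neg hj1,
          mconj_zero]
        simp
  have h0 : A2 * trunc (2 * ϖ) N0 0 + B2 * trunc (2 * ϖ) D0 0 = 0 := (key 0).symm
  have hrec : ∀ k, mconj (trunc (2 * ϖ) N0 k)
      = A2 * trunc (2 * ϖ) N0 (k + 1) + B2 * trunc (2 * ϖ) D0 (k + 1) :=
    fun k => key (k + 1)
  have hN : trunc (2 * ϖ) N0 (2 * (ϖ + 1)) = 0 := by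
    rw [trunc_apply, if_neg (by omega)]
  have hD : trunc (2 * ϖ) D0 (2 * (ϖ + 1)) = 0 := by
    rw [trunc_apply, if_neg (by omega)]
  have hXs : X = ∑ k ∈ range (2 * (ϖ + 1)), trunc (2 * ϖ) N0 k * W k * F ^ k := by
    rw [hX]; exact (hsum n N0).symm
  have hYs : Y = ∑ k ∈ range (2 * (ϖ + 1)), trunc (2 * ϖ) D0 k * W k * F ^ k := by
    rw [hY]; exact (hsum m D0).symm
  rw [hXs, hYs]
  exact core (2 * (ϖ + 1)) A2 B2 _ _ hN hD h0 hrec F hF W σ hW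

set_option maxHeartbeats 1000000 in
/-- the explicit parametric formulas solve the decoupled generalized
Sylvester equations of the antilinear system. -/
theorem stmt_10 {n m p : ℕ} (ϖ : ℕ)
    (A2 : Matrix (Fin n) (Fin n) ℂ) (B2 : Matrix (Fin n) (Fin m) ℂ)
    (N0 : ℕ → Matrix (Fin n) (Fin m) ℂ) (D0 : ℕ → Matrix (Fin m) (Fin m) ℂ)
    (hfac : ∀ s : ℂ,
      s • polyEval (2 * ϖ) (fun i => mconj (N0 i)) s - A2 * polyEval (2 * ϖ) N0 s
        = B2 * polyEval (2 * ϖ) D0 s)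
    (F1 F2 : Matrix (Fin p) (Fin p) ℝ) (Z1 Z2 Zp Zm : Matrix (Fin m) (Fin p) ℂ)
    (hZp : Zp = Z1 + mconj Z2) (hZm : Zm = Z1 - mconj Z2)
    (Xp Xm : Matrix (Fin n) (Fin p) ℂ) (Yp Ym : Matrix (Fin m) (Fin p) ℂ)
    (hXp : Xp = (∑ i ∈ range (ϖ + 1),
        N0 (2 * i) * Zp * (F1.map Complex.ofReal + F2.map Complex.ofReal) ^ (2 * i))
      + ∑ i ∈ range ϖ,
        N0 (2 * i + 1) * mconj Zp
          * (F1.map Complex.ofReal + F2.map Complex.ofReal) ^ (2 * i + 1))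
    (hYp : Yp = (∑ i ∈ range (ϖ + 1),
        D0 (2 * i) * Zp * (F1.map Complex.ofReal + F2.map Complex.ofReal) ^ (2 * i))
      + ∑ i ∈ range ϖ,
        D0 (2 * i + 1) * mconj Zp
          * (F1.map Complex.ofReal + F2.map Complex.ofReal) ^ (2 * i + 1))
    (hXm : Xm = (∑ i ∈ range (ϖ + 1),
        N0 (2 * i) * Zm * (F1.map Complex.ofReal - F2.map Complex.ofReal) ^ (2 * i))
      - ∑ i ∈ range ϖ,
        N0 (2 * i + 1) * mconj Zm
          * (F1.map Complex.ofReal - F2.map Complex.ofReal) ^ (2 * i + 1))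
    (hYm : Ym = (∑ i ∈ range (ϖ + 1),
        D0 (2 * i) * Zm * (F1.map Complex.ofReal - F2.map Complex.ofReal) ^ (2 * i))
      - ∑ i ∈ range ϖ,
        D0 (2 * i + 1) * mconj Zm
          * (F1.map Complex.ofReal - F2.map Complex.ofReal) ^ (2 * i + 1)) :
    mconj A2 * mconj Xp + mconj B2 * mconj Yp
        = Xp * (F1.map Complex.ofReal + F2.map Complex.ofReal) ∧
      -(mconj A2 * mconj Xm) - mconj B2 * mconj Ym
        = Xm * (F1.map Complex.ofReal - F2.map Complex.ofReal) := by
  constructor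
  · -- plus case
    set F : Matrix (Fin p) (Fin p) ℂ :=
      F1.map Complex.ofReal + F2.map Complex.ofReal with hFdef
    have hF : mconj F = F := by
      rw [hFdef, mconj_add_s10, mconj_realMap, mconj_realMap]
    set W : ℕ → Matrix (Fin m) (Fin p) ℂ :=
      fun k => if Even k then Zp else mconj Zp with hWdef
    have hWe : ∀ i : ℕ, W (2 * i) = Zp := by
      intro i; rw [hWdef]; simp [even_two_mul i]
    have hWo : ∀ i : ℕ, W (2 * i + 1) = mconj Zp := by
      intro i
      rw [hWdef]
      simp only []
      rw [if_neg (by simp [Nat.even_add_one, even_two_mul i])]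
    have hW : ∀ k, mconj (W k) = (1 : ℂ) • W (k + 1) := by
      intro k
      rcases Nat.even_or_odd k with he | ho
      · rw [hWdef]
        simp only []
        rw [if_pos he, if_neg (by simp [Nat.even_add_one, he]), one_smul]
      · have hne : ¬ Even k := Nat.not_even_iff_odd.mpr ho
        rw [hWdef]
        simp only []
        rw [if_neg hne, if_pos (by simp [Nat.even_add_one, hne]), mconj_mconj_s10, one_smul]
    have hXW : Xp = (∑ i ∈ range (ϖ + 1), N0 (2 * i) * W (2 * i) * F ^ (2 * i))
        + ∑ i ∈ range ϖ, N0 (2 * i + 1) * W (2 * i + 1) * F ^ (2 * i + 1) := by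
      rw [hXp]
      congr 1
      · exact Finset.sum_congr rfl fun i _ => by rw [hWe i]
      · exact Finset.sum_congr rfl fun i _ => by rw [hWo i]
    have hYW : Yp = (∑ i ∈ range (ϖ + 1), D0 (2 * i) * W (2 * i) * F ^ (2 * i))
        + ∑ i ∈ range ϖ, D0 (2 * i + 1) * W (2 * i + 1) * F ^ (2 * i + 1) := by
      rw [hYp]
      congr 1
      · exact Finset.sum_congr rfl fun i _ => by rw [hWe i]
      · exact Finset.sum_congr rfl fun i _ => by rw [hWo i]
    have h := combined ϖ A2 B2 N0 D0 hfac F hF W 1 hW Xp Yp hXW hYW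
    rw [one_smul] at h
    have h2 := congrArg mconj h
    rw [mconj_mul, mconj_mconj_s10, hF, mconj_add_s10, mconj_mul, mconj_mul] at h2
    exact h2.symm
  · -- minus case
    set F : Matrix (Fin p) (Fin p) ℂ :=
      F1.map Complex.ofReal - F2.map Complex.ofReal with hFdef
    have hF : mconj F = F := by
      rw [hFdef, sub_eq_add_neg, mconj_add_s10, mconj_neg, mconj_realMap, mconj_realMap,
        ← sub_eq_add_neg]
    set W : ℕ → Matrix (Fin m) (Fin p) ℂ :=
      fun k => if Even k then Zm else -(mconj Zm) with hWdef
    have hWe : ∀ i : ℕ, W (2 * i) = Zm := by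
      intro i; rw [hWdef]; simp [even_two_mul i]
    have hWo : ∀ i : ℕ, W (2 * i + 1) = -(mconj Zm) := by
      intro i
      rw [hWdef]
      simp only []
      rw [if_neg (by simp [Nat.even_add_one, even_two_mul i])]
    have hW : ∀ k, mconj (W k) = (-1 : ℂ) • W (k + 1) := by
      intro k
      rcases Nat.even_or_odd k with he | ho
      · rw [hWdef]
        simp only []
        rw [if_pos he, if_neg (by simp [Nat.even_add_one, he])]
        simp
      · have hne : ¬ Even k := Nat.not_even_iff_odd.mpr ho
        rw [hWdef]
        simp only []
        rw [if_neg hne, if_pos (by simp [Nat.even_add_one, hne]), mconj_neg, mconj_mconj_s10]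
        simp
    have hXW : Xm = (∑ i ∈ range (ϖ + 1), N0 (2 * i) * W (2 * i) * F ^ (2 * i))
        + ∑ i ∈ range ϖ, N0 (2 * i + 1) * W (2 * i + 1) * F ^ (2 * i + 1) := by
      rw [hXm, sub_eq_add_neg]
      congr 1
      · exact Finset.sum_congr rfl fun i _ => by rw [hWe i]
      · rw [← Finset.sum_neg_distrib]
        exact Finset.sum_congr rfl fun i _ => by
          rw [hWo i, Matrix.mul_neg, Matrix.neg_mul]
    have hYW : Ym = (∑ i ∈ range (ϖ + 1), D0 (2 * i) * W (2 * i) * F ^ (2 * i))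
        + ∑ i ∈ range ϖ, D0 (2 * i + 1) * W (2 * i + 1) * F ^ (2 * i + 1) := by
      rw [hYm, sub_eq_add_neg]
      congr 1
      · exact Finset.sum_congr rfl fun i _ => by rw [hWe i]
      · rw [← Finset.sum_neg_distrib]
        exact Finset.sum_congr rfl fun i _ => by
          rw [hWo i, Matrix.mul_neg, Matrix.neg_mul]
    have h := combined ϖ A2 B2 N0 D0 hfac F hF W (-1) hW Xm Ym hXW hYW
    have h2 := congrArg mconj h
    rw [mconj_mul, mconj_mconj_s10, hF, mconj_smul, mconj_add_s10, mconj_mul, mconj_mul] at h2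
    rw [show (starRingEnd ℂ) (-1) = (-1 : ℂ) by simp] at h2
    rw [neg_one_smul] at h2
    rw [h2]
    abel
end
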